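/- arXiv:1904.01549 — 8 statements merged into one kernel-verified Lean document; each statement's English description precedes it below -/
import Mathlib

section
/- Let f: L → M and g: M → N be homomorphisms of left S-semimodules with g injective and i-normal. If both f and g are i-normal, then g ∘ f is i-normal. -/
/-- An `S`-linear map `f : L → M` is `i`-normal if its image equals its
subtractive closure `{m ∈ M | m + f l = f l' for some l, l'}`. -/
def INormal {S L M : Type*} [Semiring S] [AddCommMonoid L] [AddCommMonoid M]
    [Module S L] [Module S M] (f : L →ₗ[S] M) : Prop :=
  ∀ m : M, (∃ l l' : L, m + f l = f l') → ∃ l : L, f l = m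

theorem inormal_comp_of_inormal
    {S L M N : Type*} [Semiring S]
    [AddCommMonoid L] [AddCommMonoid M] [AddCommMonoid N]
    [Module S L] [Module S M] [Module S N]
    (f : L →ₗ[S] M) (g : M →ₗ[S] N) (hg : Function.Injective g)
    (hf : INormal f) (hgn : INormal g) : INormal (g.comp f) := by
  rintro n ⟨l, l', h⟩
  obtain ⟨m, rfl⟩ := hgn n ⟨f l, f l', h⟩
  have hm : m + f l = f l' := hg (by rw [map_add]; exact h)
  obtain ⟨l₀, rfl⟩ := hf m ⟨l, l', hm⟩
  exact ⟨l₀, rfl⟩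
end

section
/- Let f: L → M and g: M → N be homomorphisms of left S-semimodules with f surjective and k-normal. If both f and g are k-normal, then g ∘ f is k-normal. -/
/- The kernel witnesses `f a₁, f a₂ ∈ Ker g` given by `k`-normality of `g` are lifted along the
surjection `f`; `k`-normality of `f` then equalizes `l₁ + a₁` and `l₂ + a₂` up to `Ker f`, and
`Ker f ⊆ Ker (g ∘ f)`. -/

/-- An `S`-linear map `g` is `k`-normal if whenever `g m₁ = g m₂` there exist
`k₁, k₂ ∈ Ker g` with `m₁ + k₁ = m₂ + k₂`. -/
def KNormal {S L M : Type*} [Semiring S] [AddCommMonoid L] [AddCommMonoid M]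
    [Module S L] [Module S M] (f : L →ₗ[S] M) : Prop :=
  ∀ l₁ l₂ : L, f l₁ = f l₂ → ∃ k₁ k₂ : L, f k₁ = 0 ∧ f k₂ = 0 ∧ l₁ + k₁ = l₂ + k₂

theorem knormal_comp_of_knormal
    {S L M N : Type*} [Semiring S]
    [AddCommMonoid L] [AddCommMonoid M] [AddCommMonoid N]
    [Module S L] [Module S M] [Module S N]
    (f : L →ₗ[S] M) (g : M →ₗ[S] N) (hf : Function.Surjective f)
    (hfk : KNormal f) (hgk : KNormal g) : KNormal (g.comp f) := by
  intro l₁ l₂ h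
  obtain ⟨m₁, m₂, hm₁, hm₂, hm⟩ := hgk (f l₁) (f l₂) h
  obtain ⟨a₁, rfl⟩ := hf m₁
  obtain ⟨a₂, rfl⟩ := hf m₂
  obtain ⟨p₁, p₂, hp₁, hp₂, hp⟩ :=
    hfk (l₁ + a₁) (l₂ + a₂) (by simpa only [map_add] using hm)
  refine ⟨a₁ + p₁, a₂ + p₂, ?_, ?_, by simpa only [add_assoc] using hp⟩
  · simp [hm₁, hp₁]
  · simp [hm₂, hp₂]
end

section
/- Let S = M₂(ℝ≥0), the semiring of 2×2 matrices over the nonnegative reals. The left ideals E₁ = {[[a,0],[b,0]] : a,b ∈ ℝ≥0} and N = {[[a,c],[b,d]] : a ≤ c, b ≤ d} satisfy E₁ ∩ N = {0}, but the sum E₁ + N is not direct: there exist x₁, x₂ ∈ E₁ and y₁, y₂ ∈ N with x₁ + y₁ = x₂ + y₂ but (x₁, y₁) ≠ (x₂, y₂). -/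
open Matrix

/-! Over a canonically ordered monoid, `A 0 0 ≤ A 0 1 = 0` forces `A 0 0 = 0`, which gives the trivial
intersection. Directness fails because there is no subtraction: the element `[[1,0],[0,0]]` of `E₁` is
absorbed into `N`, since `[[1,0],[0,0]] + [[0,1],[0,0]] = 0 + [[1,1],[0,0]]`. -/

theorem Matrix.eq_zero_of_col_one_eq_zero_of_le {α : Type*} [AddCommMonoid α] [PartialOrder α]
    [CanonicallyOrderedAdd α] {A : Matrix (Fin 2) (Fin 2) α} (h01 : A 0 1 = 0) (h11 : A 1 1 = 0)
    (h0 : A 0 0 ≤ A 0 1) (h1 : A 1 0 ≤ A 1 1) : A = 0 := by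
  have h00 : A 0 0 = 0 := le_zero_iff.mp (h01 ▸ h0)
  have h10 : A 1 0 = 0 := le_zero_iff.mp (h11 ▸ h1)
  ext i j
  fin_cases i <;> fin_cases j <;> assumption

/-- In `S = M₂(ℝ≥0)`, the left ideals `E₁ = {[[a,0],[b,0]]}` and
`N = {[[a,c],[b,d]] : a ≤ c, b ≤ d}` intersect trivially, yet their sum is
not direct: some element of `E₁ + N` has two distinct decompositions. -/
theorem inter_trivial_but_sum_not_direct :
    let Mat := Matrix (Fin 2) (Fin 2) NNReal
    let E₁ : Set Mat := {A | A 0 1 = 0 ∧ A 1 1 = 0}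
    let N : Set Mat := {A | A 0 0 ≤ A 0 1 ∧ A 1 0 ≤ A 1 1}
    E₁ ∩ N = {0} ∧
      ∃ x₁ ∈ E₁, ∃ x₂ ∈ E₁, ∃ y₁ ∈ N, ∃ y₂ ∈ N,
        x₁ + y₁ = x₂ + y₂ ∧ (x₁, y₁) ≠ (x₂, y₂) := by
  dsimp only
  refine ⟨?_, ?_⟩
  · ext A
    constructor
    · rintro ⟨⟨h01, h11⟩, h0, h1⟩
      exact eq_zero_of_col_one_eq_zero_of_le h01 h11 h0 h1
    · rintro rfl
      exact ⟨⟨rfl, rfl⟩, le_rfl, le_rfl⟩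
  · refine ⟨!![1, 0; 0, 0], ⟨rfl, rfl⟩, 0, ⟨rfl, rfl⟩, !![0, 1; 0, 0], ⟨zero_le_one, le_rfl⟩,
      !![1, 1; 0, 0], ⟨le_rfl, le_rfl⟩, ?_, ?_⟩
    · ext i j
      fin_cases i <;> fin_cases j <;> simp
    · intro h
      simpa using congrFun₂ (congrArg Prod.fst h) 0 0
end

section
/- Let f: L → M and g: L → N be S-linear maps of left S-semimodules, and let (g', f', P) be a pushout of (f, g) in the category of left S-semimodules. If f is surjective, then f': N → P is surjective. -/
/-! A pushout square is jointly epimorphic, so the submodule `range f'` of `P`, which contains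
`range g' = range (g' ∘ f) = range (f' ∘ g)` when `f` is surjective, is all of `P`: the universal
property produces a retraction `P → range f'` that composes with the inclusion to the identity. -/

universe u

/-- `(g' , f' , P)` is a pushout of `(f : L → M, g : L → N)`: the square
commutes and the universal property holds. -/
def IsPushout {S : Type u} [Semiring S] {L M N P : Type u}
    [AddCommMonoid L] [AddCommMonoid M] [AddCommMonoid N] [AddCommMonoid P]
    [Module S L] [Module S M] [Module S N] [Module S P]
    (f : L →ₗ[S] M) (g : L →ₗ[S] N) (g' : M →ₗ[S] P) (f' : N →ₗ[S] P) : Prop :=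
  g'.comp f = f'.comp g ∧
    ∀ (Q : Type u) (_ : AddCommMonoid Q) (_ : Module S Q)
      (gs : M →ₗ[S] Q) (fs : N →ₗ[S] Q), gs.comp f = fs.comp g →
      ∃! φ : P →ₗ[S] Q, φ.comp g' = gs ∧ φ.comp f' = fs

namespace IsPushout

variable {S : Type u} [Semiring S] {L M N P : Type u}
  [AddCommMonoid L] [AddCommMonoid M] [AddCommMonoid N] [AddCommMonoid P]
  [Module S L] [Module S M] [Module S N] [Module S P]
  {f : L →ₗ[S] M} {g : L →ₗ[S] N} {g' : M →ₗ[S] P} {f' : N →ₗ[S] P}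

theorem hom_ext (hpo : IsPushout f g g' f') {Q : Type u} [AddCommMonoid Q] [Module S Q]
    {φ ψ : P →ₗ[S] Q} (hg' : φ.comp g' = ψ.comp g') (hf' : φ.comp f' = ψ.comp f') : φ = ψ := by
  have hcomm : (φ.comp g').comp f = (φ.comp f').comp g := by
    rw [LinearMap.comp_assoc, hpo.1, LinearMap.comp_assoc]
  exact (hpo.2 Q _ _ _ _ hcomm).unique ⟨rfl, rfl⟩ ⟨hg'.symm, hf'.symm⟩

theorem eq_top_of_range_le (hpo : IsPushout f g g' f') {R : Submodule S P}
    (hg' : LinearMap.range g' ≤ R) (hf' : LinearMap.range f' ≤ R) : R = ⊤ := by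
  have hcomm : (g'.codRestrict R fun m ↦ hg' ⟨m, rfl⟩).comp f =
      (f'.codRestrict R fun n ↦ hf' ⟨n, rfl⟩).comp g := by
    ext l
    exact LinearMap.congr_fun hpo.1 l
  obtain ⟨φ, ⟨hφg', hφf'⟩, -⟩ := hpo.2 R _ _ _ _ hcomm
  have hretract : R.subtype.comp φ = LinearMap.id := by
    apply hpo.hom_ext
    · rw [LinearMap.comp_assoc, hφg']; rfl
    · rw [LinearMap.comp_assoc, hφf']; rfl
  refine eq_top_iff.mpr fun p _ ↦ ?_
  rw [← LinearMap.id_apply (R := S) p, ← hretract]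
  exact (φ p).2

end IsPushout

/-- If `f` is surjective, then the pushout map `f'` is surjective. -/
theorem pushout_surjective
    {S : Type u} [Semiring S] {L M N P : Type u}
    [AddCommMonoid L] [AddCommMonoid M] [AddCommMonoid N] [AddCommMonoid P]
    [Module S L] [Module S M] [Module S N] [Module S P]
    (f : L →ₗ[S] M) (g : L →ₗ[S] N) (g' : M →ₗ[S] P) (f' : N →ₗ[S] P)
    (hpo : IsPushout f g g' f')
    (hf : Function.Surjective f) : Function.Surjective f' := by
  have hrange : LinearMap.range g' ≤ LinearMap.range f' :=
    calc LinearMap.range g' = LinearMap.range (g'.comp f) :=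
          (LinearMap.range_comp_of_range_eq_top g' (LinearMap.range_eq_top.mpr hf)).symm
      _ = LinearMap.range (f'.comp g) := by rw [hpo.1]
      _ ≤ LinearMap.range f' := LinearMap.range_comp_le_range g f'
  exact LinearMap.range_eq_top.mp (hpo.eq_top_of_range_le hrange le_rfl)
end

section
/- Let f: L → M and g: L → N be S-linear maps of left S-semimodules with f injective and g a normal epimorphism (surjective and k-normal). If (g', f', P) is a pushout of (f, g), then f': N → P is injective. -/
/-!
Let `K = f (Ker g)` and let `~` be the Bourne congruence of `K` on `M`: `m₁ ~ m₂` iff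
`m₁ + k₁ = m₂ + k₂` for some `k₁, k₂ ∈ K`. Since `g` is a normal epimorphism, `g l ↦ [f l]` is a
well-defined linear map `N → M/~`, and it forms a commutative square with the projection
`M → M/~`. The universal property factors it through `f'`, so `f' n₁ = f' n₂` forces
`[f l₁] = [f l₂]` for preimages `lᵢ` of `nᵢ`; injectivity of `f` turns this into
`l₁ + k₁ = l₂ + k₂` with `kᵢ ∈ Ker g`, whence `n₁ = n₂`.
-/

universe u

section Semimodule

variable {S L M N Q : Type*} [Semiring S] [AddCommMonoid L] [AddCommMonoid M] [AddCommMonoid N]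
  [AddCommMonoid Q] [Module S L] [Module S M] [Module S N] [Module S Q]

def ModuleCon.mkQ (c : ModuleCon S M) : M →ₗ[S] c.Quotient where
  toFun := Quotient.mk _
  map_add' _ _ := rfl
  map_smul' _ _ := rfl

theorem ModuleCon.mkQ_eq_mkQ_iff (c : ModuleCon S M) {m₁ m₂ : M} :
    c.mkQ m₁ = c.mkQ m₂ ↔ c.r m₁ m₂ :=
  Quotient.eq

def Submodule.bourneCon (K : Submodule S M) : ModuleCon S M where
  r m₁ m₂ := ∃ k₁ ∈ K, ∃ k₂ ∈ K, m₁ + k₁ = m₂ + k₂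
  iseqv := by
    refine ⟨fun m => ⟨0, K.zero_mem, 0, K.zero_mem, rfl⟩, ?_, ?_⟩
    · rintro m₁ m₂ ⟨k₁, hk₁, k₂, hk₂, h⟩
      exact ⟨k₂, hk₂, k₁, hk₁, h.symm⟩
    · rintro m₁ m₂ m₃ ⟨k₁, hk₁, k₂, hk₂, h₁₂⟩ ⟨k₃, hk₃, k₄, hk₄, h₂₃⟩
      refine ⟨k₁ + k₃, K.add_mem hk₁ hk₃, k₄ + k₂, K.add_mem hk₄ hk₂, ?_⟩
      calc m₁ + (k₁ + k₃) = (m₁ + k₁) + k₃ := (add_assoc ..).symm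
        _ = (m₂ + k₃) + k₂ := by rw [h₁₂, add_right_comm]
        _ = m₃ + (k₄ + k₂) := by rw [h₂₃, add_assoc]
  add' := by
    rintro m₁ m₂ m₃ m₄ ⟨k₁, hk₁, k₂, hk₂, h₁₂⟩ ⟨k₃, hk₃, k₄, hk₄, h₃₄⟩
    refine ⟨k₁ + k₃, K.add_mem hk₁ hk₃, k₂ + k₄, K.add_mem hk₂ hk₄, ?_⟩
    rw [add_add_add_comm, h₁₂, h₃₄, add_add_add_comm]
  smul s := by
    rintro m₁ m₂ ⟨k₁, hk₁, k₂, hk₂, h⟩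
    exact ⟨s • k₁, K.smul_mem s hk₁, s • k₂, K.smul_mem s hk₂, by rw [← smul_add, ← smul_add, h]⟩

theorem LinearMap.exists_comp_eq_of_surjective {g : L →ₗ[S] N} (hg : Function.Surjective g)
    (h : L →ₗ[S] Q) (hgh : ∀ l₁ l₂, g l₁ = g l₂ → h l₁ = h l₂) :
    ∃ φ : N →ₗ[S] Q, φ ∘ₗ g = h := by
  have key (l : L) : h (Function.surjInv hg (g l)) = h l := hgh _ _ (Function.surjInv_eq hg _)
  refine ⟨{ toFun := h ∘ Function.surjInv hg, map_add' := ?_, map_smul' := ?_ }, ?_⟩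
  · intro n₁ n₂
    obtain ⟨l₁, rfl⟩ := hg n₁
    obtain ⟨l₂, rfl⟩ := hg n₂
    simp only [Function.comp_apply, ← map_add, key]
  · intro s n
    obtain ⟨l, rfl⟩ := hg n
    simp only [Function.comp_apply, ← map_smul, key, RingHom.id_apply]
  · ext l
    exact key l

theorem LinearMap.apply_add_of_mem_ker (g : L →ₗ[S] N) (l : L) {k : L} (hk : k ∈ ker g) :
    g (l + k) = g l := by
  rw [map_add, mem_ker.1 hk, add_zero]

theorem bourneCon_map_ker_iff {f : L →ₗ[S] M} {g : L →ₗ[S] N} (hf : Function.Injective f)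
    (hgk : KNormal g) {l₁ l₂ : L} :
    ((LinearMap.ker g).map f).bourneCon.r (f l₁) (f l₂) ↔ g l₁ = g l₂ := by
  constructor
  · rintro ⟨_, ⟨k₁, hk₁, rfl⟩, _, ⟨k₂, hk₂, rfl⟩, h⟩
    have hl : l₁ + k₁ = l₂ + k₂ := hf (by rw [map_add, map_add, h])
    rw [← g.apply_add_of_mem_ker l₁ hk₁, hl, g.apply_add_of_mem_ker l₂ hk₂]
  · intro h
    obtain ⟨k₁, k₂, hk₁, hk₂, hl⟩ := hgk l₁ l₂ h
    exact ⟨f k₁, ⟨k₁, hk₁, rfl⟩, f k₂, ⟨k₂, hk₂, rfl⟩, by rw [← map_add, ← map_add, hl]⟩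

end Semimodule

theorem IsPushout.apply_eq_of_inr_eq {S : Type u} [Semiring S] {L M N P Q : Type u}
    [AddCommMonoid L] [AddCommMonoid M] [AddCommMonoid N] [AddCommMonoid P] [AddCommMonoid Q]
    [Module S L] [Module S M] [Module S N] [Module S P] [Module S Q]
    {f : L →ₗ[S] M} {g : L →ₗ[S] N} {g' : M →ₗ[S] P} {f' : N →ₗ[S] P}
    (hpo : IsPushout f g g' f') {gs : M →ₗ[S] Q} {fs : N →ₗ[S] Q} (hsq : gs ∘ₗ f = fs ∘ₗ g)
    {n₁ n₂ : N} (hn : f' n₁ = f' n₂) : fs n₁ = fs n₂ := by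
  obtain ⟨φ, ⟨-, hφ⟩, -⟩ := hpo.2 Q inferInstance inferInstance gs fs hsq
  rw [← hφ, LinearMap.comp_apply, LinearMap.comp_apply, hn]

/-- If `f` is injective and `g` is a normal epimorphism, then the pushout map
`f'` is injective. -/
theorem pushout_injective
    {S : Type u} [Semiring S] {L M N P : Type u}
    [AddCommMonoid L] [AddCommMonoid M] [AddCommMonoid N] [AddCommMonoid P]
    [Module S L] [Module S M] [Module S N] [Module S P]
    (f : L →ₗ[S] M) (g : L →ₗ[S] N) (g' : M →ₗ[S] P) (f' : N →ₗ[S] P)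
    (hpo : IsPushout f g g' f')
    (hf : Function.Injective f) (hgs : Function.Surjective g) (hgk : KNormal g) :
    Function.Injective f' := by
  let c := ((LinearMap.ker g).map f).bourneCon
  obtain ⟨fs, hfs⟩ := LinearMap.exists_comp_eq_of_surjective hgs (c.mkQ ∘ₗ f) fun l₁ l₂ h =>
    c.mkQ_eq_mkQ_iff.2 ((bourneCon_map_ker_iff hf hgk).2 h)
  intro n₁ n₂ hn
  obtain ⟨l₁, rfl⟩ := hgs n₁
  obtain ⟨l₂, rfl⟩ := hgs n₂
  have hfs_eq : fs (g l₁) = fs (g l₂) := hpo.apply_eq_of_inr_eq hfs.symm hn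
  rw [← LinearMap.comp_apply, ← LinearMap.comp_apply, hfs] at hfs_eq
  exact (bourneCon_map_ker_iff hf hgk).1 (c.mkQ_eq_mkQ_iff.1 hfs_eq)
end

section
/- Every projective left S-semimodule is e-projective: if P is a retract of a free left S-semimodule, then for every normal epimorphism g: M → N of left S-semimodules, the induced map Hom_S(P, M) → Hom_S(P, N), β ↦ g ∘ β, is a surjective k-normal monoid homomorphism. -/
/-!
A retract of a free semimodule is projective, so linear maps out of `P` lift along surjections;
surjectivity of `β ↦ g ∘ β` is exactly this. For `k`-normality, consider the semimodule of
witnesses `((m, m'), (k, k'))` with `g k = g k' = 0` and `m + k = m' + k'`: `k`-normality of `g`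
says that its projection onto the kernel pair `{(m, m') | g m = g m'}` is surjective. Lifting
`(β, β') : P → kernel pair` along this projection produces the required `u` and `u'`.
-/

universe u

namespace KNormal

open LinearMap

variable {S M N : Type*} [Semiring S] [AddCommMonoid M] [AddCommMonoid N]
  [Module S M] [Module S N]

def kernelPair (g : M →ₗ[S] N) : Submodule S (M × M) :=
  (g ∘ₗ fst S M M).eqLocus (g ∘ₗ snd S M M)

def witnesses (g : M →ₗ[S] N) : Submodule S ((M × M) × (M × M)) where
  carrier := {x | g x.2.1 = 0 ∧ g x.2.2 = 0 ∧ x.1.1 + x.2.1 = x.1.2 + x.2.2}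
  zero_mem' := by simp
  add_mem' := by
    rintro ⟨⟨m₁, m₁'⟩, ⟨k₁, k₁'⟩⟩ ⟨⟨m₂, m₂'⟩, ⟨k₂, k₂'⟩⟩ ⟨hk₁, hk₁', h₁⟩ ⟨hk₂, hk₂', h₂⟩
    refine ⟨by simp [hk₁, hk₂], by simp [hk₁', hk₂'], ?_⟩
    calc m₁ + m₂ + (k₁ + k₂) = (m₁ + k₁) + (m₂ + k₂) := add_add_add_comm _ _ _ _
      _ = (m₁' + k₁') + (m₂' + k₂') := by rw [h₁, h₂]
      _ = m₁' + m₂' + (k₁' + k₂') := add_add_add_comm _ _ _ _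
  smul_mem' := by
    rintro c ⟨⟨m, m'⟩, ⟨k, k'⟩⟩ ⟨hk, hk', h⟩
    exact ⟨by simp [hk], by simp [hk'], by simp only [Prod.smul_fst, Prod.smul_snd, ← smul_add, h]⟩

def witnessesToKernelPair (g : M →ₗ[S] N) : witnesses g →ₗ[S] kernelPair g :=
  codRestrict (kernelPair g) (fst S (M × M) (M × M) ∘ₗ (witnesses g).subtype) fun x => by
    obtain ⟨hk, hk', h⟩ := x.2
    show g _ = g _
    simpa [hk, hk'] using congrArg g h

theorem surjective_witnessesToKernelPair {g : M →ₗ[S] N} (hg : KNormal g) :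
    Function.Surjective (witnessesToKernelPair g) := by
  rintro ⟨⟨m, m'⟩, hm⟩
  obtain ⟨k, k', hk, hk', h⟩ := hg m m' hm
  exact ⟨⟨((m, m'), (k, k')), hk, hk', h⟩, rfl⟩

theorem exists_add_eq_add_of_comp_eq {P : Type*} [AddCommMonoid P] [Module S P]
    [Module.Projective S P] {g : M →ₗ[S] N} (hg : KNormal g) {β β' : P →ₗ[S] M}
    (h : g ∘ₗ β = g ∘ₗ β') :
    ∃ u u' : P →ₗ[S] M, g ∘ₗ u = 0 ∧ g ∘ₗ u' = 0 ∧ β + u = β' + u' := by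
  obtain ⟨w, hw⟩ := Module.projective_lifting_property (witnessesToKernelPair g)
    (codRestrict (kernelPair g) (β.prod β') fun p => LinearMap.congr_fun h p)
    (surjective_witnessesToKernelPair hg)
  have hw_fst p : (w p : (M × M) × (M × M)).1 = (β p, β' p) :=
    congrArg Subtype.val (LinearMap.congr_fun hw p)
  let v := snd S (M × M) (M × M) ∘ₗ (witnesses g).subtype ∘ₗ w
  refine ⟨fst S M M ∘ₗ v, snd S M M ∘ₗ v, ?_, ?_, ?_⟩ <;> ext p
  · exact (w p).2.1
  · exact (w p).2.2.1
  · have hsum := (w p).2.2.2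
    rw [hw_fst p] at hsum
    exact hsum

end KNormal

/-- Every projective left `S`-semimodule is `e`-projective: if `P` is a retract
of a free semimodule `S^(Λ)`, then for every normal epimorphism `g : M → N` the
induced map `Hom(P,M) → Hom(P,N)`, `β ↦ g ∘ β`, is surjective and `k`-normal. -/
theorem projective_implies_e_projective
    {S : Type u} [Semiring S] {P M N : Type u}
    [AddCommMonoid P] [AddCommMonoid M] [AddCommMonoid N]
    [Module S P] [Module S M] [Module S N]
    (Λ : Type u) (θ : (Λ →₀ S) →ₗ[S] P) (ψ : P →ₗ[S] (Λ →₀ S))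
    (hret : θ.comp ψ = LinearMap.id)
    (g : M →ₗ[S] N) (hgs : Function.Surjective g) (hgk : KNormal g) :
    Function.Surjective (fun β : P →ₗ[S] M => g.comp β) ∧
      ∀ β β' : P →ₗ[S] M, g.comp β = g.comp β' →
        ∃ u u' : P →ₗ[S] M, g.comp u = 0 ∧ g.comp u' = 0 ∧ β + u = β' + u' := by
  have : Module.Projective S P := .of_split ψ θ hret
  exact ⟨fun γ => Module.projective_lifting_property g γ hgs,
    fun _ _ => hgk.exists_add_eq_add_of_comp_eq⟩
end

section
/- Let S = ℚ≥0 and let 𝔹 = {0, 1} with 1 + 1 = 1 be the Boolean S-semimodule where s·1 = 1 for all s ≠ 0. Then 𝔹 is S-e-projective but not S-projective: (a) every S-linear map from 𝔹 to S is zero, so the identity map 𝔹 → 𝔹 cannot be lifted along the surjection f: S → 𝔹 sending nonzero elements to 1; (b) every normal epimorphism f: S → N with N ≠ 0 is an isomorphism, and Hom_S(𝔹, N) = 0 for such N, so 𝔹 is S-e-projective. -/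
/-!
Since `1 + 1 = 1` in `𝔹`, a linear map out of `𝔹` sends `1` to an idempotent. Idempotents vanish
in a cancellative module, and also in the image of a `k`-normal map out of one: from
`q (s + s) = q s` normality gives `s + s + k₁ = s + k₂` with `q k₁ = q k₂ = 0`, so `q s = q k₂ = 0`.
Hence `Hom(𝔹, ℚ≥0) = 0`, so the identity of `𝔹` lifts along no map `ℚ≥0 → 𝔹`, and
`Hom(𝔹, N) = 0` for every normal epimorphism `ℚ≥0 → N`, which makes `e`-projectivity trivial.
A nonzero `k`-normal map out of the semifield `ℚ≥0` has zero kernel, hence is injective.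
-/

/-- The Boolean semimodule `𝔹 = {0, 1}` with `1 + 1 = 1`. -/
inductive Bool2 : Type
  | zero : Bool2
  | one : Bool2
  deriving DecidableEq

instance : Zero Bool2 := ⟨Bool2.zero⟩

instance : Add Bool2 :=
  ⟨fun x y => match x, y with
    | Bool2.zero, b => b
    | Bool2.one, _ => Bool2.one⟩

instance : AddCommMonoid Bool2 where
  add_assoc a b c := by cases a <;> cases b <;> cases c <;> rfl
  zero_add a := rfl
  add_zero a := by cases a <;> rfl
  add_comm a b := by cases a <;> cases b <;> rfl
  nsmul := nsmulRec

/-- The action of `ℚ≥0`: `s • 1 = 1` iff `s ≠ 0`. -/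
instance : SMul ℚ≥0 Bool2 := ⟨fun s b => if s = 0 then Bool2.zero else b⟩

instance : Module ℚ≥0 Bool2 where
  one_smul b := by
    show (if (1 : ℚ≥0) = 0 then Bool2.zero else b) = b
    simp
  mul_smul x y b := by
    show (if x * y = 0 then Bool2.zero else b) =
      (if x = 0 then Bool2.zero else (if y = 0 then Bool2.zero else b))
    by_cases hx : x = 0 <;> by_cases hy : y = 0 <;> simp [hx, hy]
  smul_zero s := by
    show (if s = 0 then Bool2.zero else Bool2.zero) = (0 : Bool2)
    simp; rfl
  smul_add s a b := by
    show (if s = 0 then Bool2.zero else a + b) =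
      (if s = 0 then Bool2.zero else a) + (if s = 0 then Bool2.zero else b)
    by_cases hs : s = 0 <;> simp [hs] <;> rfl
  add_smul x y b := by
    show (if x + y = 0 then Bool2.zero else b) =
      (if x = 0 then Bool2.zero else b) + (if y = 0 then Bool2.zero else b)
    by_cases hx : x = 0 <;> by_cases hy : y = 0 <;> cases b <;>
      simp [hx, hy, add_eq_zero] <;> rfl
  zero_smul b := by
    show (if (0 : ℚ≥0) = 0 then Bool2.zero else b) = (0 : Bool2)
    simp; rfl

namespace Bool2

theorem one_add_one : Bool2.one + Bool2.one = Bool2.one := rfl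

variable {M : Type*} [AddCommMonoid M] [Module ℚ≥0 M]

theorem linearMap_eq_zero_of_apply_one {φ : Bool2 →ₗ[ℚ≥0] M} (h : φ one = 0) : φ = 0 := by
  ext b
  cases b
  · exact map_zero φ
  · exact h

theorem linearMap_apply_one_add_self (φ : Bool2 →ₗ[ℚ≥0] M) : φ one + φ one = φ one := by
  rw [← map_add, one_add_one]

theorem linearMap_eq_zero [IsLeftCancelAdd M] (φ : Bool2 →ₗ[ℚ≥0] M) : φ = 0 :=
  linearMap_eq_zero_of_apply_one (add_eq_left.mp (linearMap_apply_one_add_self φ))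

end Bool2

namespace LinearMap

variable {R M N : Type*} [Semiring R] [AddCommMonoid M] [AddCommMonoid N] [Module R M] [Module R N]

def IsKNormal (q : M →ₗ[R] N) : Prop :=
  ∀ x y : M, q x = q y → ∃ k₁ k₂ : M, q k₁ = 0 ∧ q k₂ = 0 ∧ x + k₁ = y + k₂

theorem IsKNormal.apply_eq_zero_of_add_self [IsLeftCancelAdd M] {q : M →ₗ[R] N}
    (hq : q.IsKNormal) {s : M} (hs : q s + q s = q s) : q s = 0 := by
  obtain ⟨k₁, k₂, hk₁, hk₂, hsum⟩ := hq (s + s) s (by rw [map_add, hs])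
  have hk : s + k₁ = k₂ := add_left_cancel (by rwa [← add_assoc])
  calc q s = q s + q k₁ := by rw [hk₁, add_zero]
    _ = 0 := by rw [← map_add, hk, hk₂]

theorem IsKNormal.injective {K : Type*} [DivisionSemiring K] [Module K N] {q : K →ₗ[K] N}
    (hq : q.IsKNormal) (hq0 : q ≠ 0) : Function.Injective q := by
  have hq1 : q 1 ≠ 0 := fun h => hq0 (ext_ring h)
  have hker : ∀ k, q k = 0 → k = 0 := fun k hk =>
    (smul_eq_zero.mp (by rwa [← map_smul, smul_eq_mul, mul_one])).resolve_right hq1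
  intro x y hxy
  obtain ⟨k₁, k₂, hk₁, hk₂, hsum⟩ := hq x y hxy
  simpa [hker k₁ hk₁, hker k₂ hk₂] using hsum

end LinearMap

theorem Bool2.linearMap_eq_zero_of_isKNormal {M N : Type*} [AddCommMonoid M] [IsLeftCancelAdd M]
    [Module ℚ≥0 M] [AddCommMonoid N] [Module ℚ≥0 N] {q : M →ₗ[ℚ≥0] N} (hq : q.IsKNormal)
    (hsurj : Function.Surjective q) (γ : Bool2 →ₗ[ℚ≥0] N) : γ = 0 := by
  obtain ⟨s, hs⟩ := hsurj (γ one)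
  refine linearMap_eq_zero_of_apply_one ?_
  rw [← hs]
  exact hq.apply_eq_zero_of_add_self (by rw [hs, linearMap_apply_one_add_self])

theorem bool2_e_projective_not_projective_general
    (f : ℚ≥0 →ₗ[ℚ≥0] Bool2) :
    (∀ φ : Bool2 →ₗ[ℚ≥0] ℚ≥0, φ = 0) ∧
    (¬ ∃ h : Bool2 →ₗ[ℚ≥0] ℚ≥0, f.comp h = LinearMap.id) ∧
    (∀ (N : Type) (_ : AddCommMonoid N) (_ : Module ℚ≥0 N)
        (q : ℚ≥0 →ₗ[ℚ≥0] N), Function.Surjective q →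
        (∀ x y : ℚ≥0, q x = q y →
          ∃ k₁ k₂ : ℚ≥0, q k₁ = 0 ∧ q k₂ = 0 ∧ x + k₁ = y + k₂) →
        (∃ n : N, n ≠ 0) → Function.Bijective q) ∧
    (∀ (N : Type) (_ : AddCommMonoid N) (_ : Module ℚ≥0 N)
        (q : ℚ≥0 →ₗ[ℚ≥0] N), Function.Surjective q →
        (∀ x y : ℚ≥0, q x = q y →
          ∃ k₁ k₂ : ℚ≥0, q k₁ = 0 ∧ q k₂ = 0 ∧ x + k₁ = y + k₂) →
        (Function.Surjective (fun β : Bool2 →ₗ[ℚ≥0] ℚ≥0 => q.comp β) ∧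
          ∀ β β' : Bool2 →ₗ[ℚ≥0] ℚ≥0, q.comp β = q.comp β' →
            ∃ u u' : Bool2 →ₗ[ℚ≥0] ℚ≥0,
              q.comp u = 0 ∧ q.comp u' = 0 ∧ β + u = β' + u')) := by
  refine ⟨Bool2.linearMap_eq_zero, ?_, ?_, ?_⟩
  · rintro ⟨h, hcomp⟩
    have h_one := LinearMap.congr_fun hcomp Bool2.one
    rw [Bool2.linearMap_eq_zero h] at h_one
    simp at h_one
  · intro N _ _ q hsurj (hq : q.IsKNormal) ⟨n, hn⟩
    refine ⟨hq.injective ?_, hsurj⟩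
    rintro rfl
    obtain ⟨s, rfl⟩ := hsurj n
    exact hn rfl
  · intro N _ _ q hsurj (hq : q.IsKNormal)
    refine ⟨fun γ => ⟨0, ?_⟩, fun β β' _ => ⟨0, 0, ?_, ?_, ?_⟩⟩
    · simp [Bool2.linearMap_eq_zero_of_isKNormal hq hsurj γ]
    · simp
    · simp
    · simp [Bool2.linearMap_eq_zero β, Bool2.linearMap_eq_zero β']

/-- `𝔹` is `ℚ≥0`-`e`-projective but not `ℚ≥0`-projective:
(a1) every linear map `𝔹 → ℚ≥0` is zero; (a2) the identity of `𝔹` does not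
lift along the surjection `f : ℚ≥0 → 𝔹` sending nonzero elements to `1`;
(b1) every normal epimorphism `q : ℚ≥0 → N` with `N ≠ 0` is an isomorphism;
(b2) for every normal epimorphism `q : ℚ≥0 → N` the induced map
`Hom(𝔹, ℚ≥0) → Hom(𝔹, N)` is surjective and `k`-normal, i.e. `𝔹` is
`ℚ≥0`-`e`-projective. -/
theorem bool2_e_projective_not_projective
    (f : ℚ≥0 →ₗ[ℚ≥0] Bool2)
    (hf : ∀ s : ℚ≥0, f s = if s = 0 then Bool2.zero else Bool2.one) :
    (∀ φ : Bool2 →ₗ[ℚ≥0] ℚ≥0, φ = 0) ∧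
    (¬ ∃ h : Bool2 →ₗ[ℚ≥0] ℚ≥0, f.comp h = LinearMap.id) ∧
    (∀ (N : Type) (_ : AddCommMonoid N) (_ : Module ℚ≥0 N)
        (q : ℚ≥0 →ₗ[ℚ≥0] N), Function.Surjective q →
        (∀ x y : ℚ≥0, q x = q y →
          ∃ k₁ k₂ : ℚ≥0, q k₁ = 0 ∧ q k₂ = 0 ∧ x + k₁ = y + k₂) →
        (∃ n : N, n ≠ 0) → Function.Bijective q) ∧
    (∀ (N : Type) (_ : AddCommMonoid N) (_ : Module ℚ≥0 N)
        (q : ℚ≥0 →ₗ[ℚ≥0] N), Function.Surjective q →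
        (∀ x y : ℚ≥0, q x = q y →
          ∃ k₁ k₂ : ℚ≥0, q k₁ = 0 ∧ q k₂ = 0 ∧ x + k₁ = y + k₂) →
        (Function.Surjective (fun β : Bool2 →ₗ[ℚ≥0] ℚ≥0 => q.comp β) ∧
          ∀ β β' : Bool2 →ₗ[ℚ≥0] ℚ≥0, q.comp β = q.comp β' →
            ∃ u u' : Bool2 →ₗ[ℚ≥0] ℚ≥0,
              q.comp u = 0 ∧ q.comp u' = 0 ∧ β + u = β' + u')) :=
  bool2_e_projective_not_projective_general f
end

section
/- Let S = M₂(ℝ≥0) and N₁ = {[[a,a],[b,b]] : a, b ∈ ℝ≥0}, a subtractive left ideal of S. Then the quotient S/N₁ admits no S-linear section of the canonical projection π: S → S/N₁; i.e., there is no S-linear g: S/N₁ → S with π ∘ g = id. Consequently S/N₁ is not S-k-projective. -/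
/-!
Let `m := g (π 1)` for a section `g`. Reading `π m = π 1` in the first row gives
`m₀₀ = 1 + m₀₁`. On the other hand `u = [[1,1],[0,0]]` lies in `N₁`, so `π u = 0` and
`u * m = g (u • π 1) = g (π u) = 0`; its `(0,0)` entry `m₀₀ + m₁₀` vanishes, forcing `m₀₀ = 0`,
which is impossible in a zero-sum-free semiring.
-/

open Matrix

theorem LinearMap.mul_apply_map_one_eq_zero {S Q : Type*} [Semiring S] [AddCommMonoid Q]
    [Module S Q] (π : S →ₗ[S] Q) (g : Q →ₗ[S] S) {u : S} (hu : π u = 0) :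
    u * g (π 1) = 0 := by
  rw [← smul_eq_mul, ← map_smul, ← map_smul, smul_eq_mul, mul_one, hu, map_zero]

namespace Matrix

variable {R : Type*} [Semiring R]

theorem zero_zero_eq_one_add_zero_one_of_add_eq [IsRightCancelAdd R]
    {m n n' : Matrix (Fin 2) (Fin 2) R} (hn : n 0 0 = n 0 1) (hn' : n' 0 0 = n' 0 1)
    (h : m + n = 1 + n') : m 0 0 = 1 + m 0 1 := by
  have h00 : m 0 0 + n 0 0 = 1 + n' 0 0 := by
    simpa using congrFun (congrFun h 0) 0
  have h01 : m 0 1 + n 0 0 = n' 0 0 := by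
    simpa [hn, hn'] using congrFun (congrFun h 0) 1
  exact add_right_cancel (b := n 0 0) (by rw [h00, add_assoc, h01])

theorem zero_zero_eq_zero_of_mul_eq_zero [Subsingleton (AddUnits R)]
    {m : Matrix (Fin 2) (Fin 2) R} (h : !![1, 1; 0, 0] * m = 0) : m 0 0 = 0 := by
  have h00 : m 0 0 + m 1 0 = 0 := by
    simpa [Matrix.mul_apply, Fin.sum_univ_two] using congrFun (congrFun h 0) 0
  exact (add_eq_zero.mp h00).1

end Matrix

theorem quotient_by_N1_has_no_section_general
    (Q : Type) [AddCommMonoid Q]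
    [Module (Matrix (Fin 2) (Fin 2) NNReal) Q]
    (π : Matrix (Fin 2) (Fin 2) NNReal →ₗ[Matrix (Fin 2) (Fin 2) NNReal] Q)
    (hquot : ∀ x y : Matrix (Fin 2) (Fin 2) NNReal,
      π x = π y ↔ ∃ n : Matrix (Fin 2) (Fin 2) NNReal,
        (n 0 0 = n 0 1 ∧ n 1 0 = n 1 1) ∧
        ∃ n' : Matrix (Fin 2) (Fin 2) NNReal,
          (n' 0 0 = n' 0 1 ∧ n' 1 0 = n' 1 1) ∧ x + n = y + n') :
    ¬ ∃ g : Q →ₗ[Matrix (Fin 2) (Fin 2) NNReal] Matrix (Fin 2) (Fin 2) NNReal,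
        π.comp g = LinearMap.id := by
  rintro ⟨g, hg⟩
  set m := g (π 1)
  obtain ⟨n, ⟨hn, -⟩, n', ⟨hn', -⟩, hmn⟩ := (hquot m 1).mp (LinearMap.congr_fun hg (π 1))
  have hu : π !![1, 1; 0, 0] = 0 := by
    rw [← map_zero π, hquot]
    exact ⟨0, by simp, !![1, 1; 0, 0], by simp, by simp⟩
  have hm00 : m 0 0 = 0 :=
    zero_zero_eq_zero_of_mul_eq_zero (π.mul_apply_map_one_eq_zero g hu)
  have h := zero_zero_eq_one_add_zero_one_of_add_eq hn hn' hmn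
  rw [hm00] at h
  exact one_ne_zero (add_eq_zero.mp h.symm).1

/-- Let `S = M₂(ℝ≥0)` and `N₁ = {[[a,a],[b,b]]}`, a subtractive left ideal.
For any realization `π : S → Q` of the quotient `S/N₁` (i.e. `π` is surjective
and `π x = π y ↔ x + n = y + n'` for some `n, n' ∈ N₁`), there is no `S`-linear
section `g : Q → S` with `π ∘ g = id`.  Hence `S/N₁` is not `S`-`k`-projective. -/
theorem quotient_by_N1_has_no_section
    (Q : Type) [AddCommMonoid Q]
    [Module (Matrix (Fin 2) (Fin 2) NNReal) Q]
    (π : Matrix (Fin 2) (Fin 2) NNReal →ₗ[Matrix (Fin 2) (Fin 2) NNReal] Q)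
    (hsurj : Function.Surjective π)
    (hquot : ∀ x y : Matrix (Fin 2) (Fin 2) NNReal,
      π x = π y ↔ ∃ n : Matrix (Fin 2) (Fin 2) NNReal,
        (n 0 0 = n 0 1 ∧ n 1 0 = n 1 1) ∧
        ∃ n' : Matrix (Fin 2) (Fin 2) NNReal,
          (n' 0 0 = n' 0 1 ∧ n' 1 0 = n' 1 1) ∧ x + n = y + n') :
    ¬ ∃ g : Q →ₗ[Matrix (Fin 2) (Fin 2) NNReal] Matrix (Fin 2) (Fin 2) NNReal,
        π.comp g = LinearMap.id :=
  quotient_by_N1_has_no_section_general Q π hquot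
end
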